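/- Let ν be an uncountable limit cardinal with cofinality θ, let (κ_α⁺)_{α<θ} be a family of successor cardinals less than ν with supremum ν, and let P be a poset with no infinite antichain such that Cov(P) ≥ ν and Cov(P \ ↑x) < ν for every x ∈ P. Assume moreover that for every cardinal μ < ν and every x ∈ P with Cov(↑x) > μ⁺, ↑x contains a pair of points a < b with Cov([a,b)) ≥ μ. Then there is an increasing sequence (x_α)_{α<θ} in P such that Cov([x_α, x_{α+1})) ≥ κ_α⁺ for every α < θ. -/

import Mathlib

open Cardinal

noncomputable def chainCov {α : Type*} [PartialOrder α] (S : Set α) : Cardinal :=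
  sInf {c : Cardinal | ∃ F : Set (Set α),
    (∀ T ∈ F, T ⊆ S ∧ IsChain (· ≤ ·) T) ∧ ⋃₀ F = S ∧ #F = c}

/-!
Covering `P` by `↑x` and its complement shows `Cov(↑x) ≥ ν` for every `x`, so the interval
hypothesis applies above every point and with every `μ < ν`. Dually, fewer than `cf ν` points
always have a common upper bound: otherwise the complements of their cones cover `P` by fewer
than `cf ν` sets, each of chain covering number `< ν`, giving `Cov(P) < ν`. The sequence is then
built by transfinite recursion, taking `x_α` above the right endpoints `b_β` of the intervals
`x_β ≤ a_β < b_β` with `Cov([a_β, b_β)) ≥ κ_β⁺` chosen at the stages `β < α`; then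
`[a_α, b_α) ⊆ [x_α, x_{α+1})`.
-/

namespace Cardinal

theorem sum_lt_of_lt_cof_ord {ι : Type u} {f : ι → Cardinal.{u}} {c : Cardinal.{u}}
    (hc : ℵ₀ ≤ c) (hι : #ι < c.ord.cof) (hf : ∀ i, f i < c) : sum f < c :=
  (sum_le_mk_mul_iSup f).trans_lt <|
    mul_lt_of_lt hc (hι.trans_le (Ordinal.cof_ord_le c)) (iSup_lt_of_lt_cof_ord hι hf)

end Cardinal

open Set

section chainCov

variable {α : Type u} [PartialOrder α]

theorem exists_chain_cover_mk_eq_chainCov (S : Set α) : ∃ F : Set (Set α),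
    (∀ T ∈ F, T ⊆ S ∧ IsChain (· ≤ ·) T) ∧ ⋃₀ F = S ∧ #F = chainCov S := by
  show chainCov S ∈ {c : Cardinal | ∃ F : Set (Set α),
    (∀ T ∈ F, T ⊆ S ∧ IsChain (· ≤ ·) T) ∧ ⋃₀ F = S ∧ #F = c}
  refine csInf_mem ⟨_, (fun x => ({x} : Set α)) '' S, ?_, by simp, rfl⟩
  rintro T ⟨x, hx, rfl⟩
  exact ⟨singleton_subset_iff.2 hx, subsingleton_singleton.isChain⟩

theorem chainCov_le_mk {S : Set α} {F : Set (Set α)} (hF : ∀ T ∈ F, IsChain (· ≤ ·) T)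
    (hS : ⋃₀ F = S) : chainCov S ≤ #F :=
  csInf_le' ⟨F, fun T hT => ⟨hS ▸ subset_sUnion_of_mem hT, hF T hT⟩, hS, rfl⟩

theorem chainCov_mono {S T : Set α} (h : S ⊆ T) : chainCov S ≤ chainCov T := by
  obtain ⟨F, hF, hFT, hcard⟩ := exists_chain_cover_mk_eq_chainCov T
  calc chainCov S ≤ #((· ∩ S) '' F) := by
        refine chainCov_le_mk ?_ ?_
        · rintro _ ⟨C, hC, rfl⟩
          exact (hF C hC).2.mono inter_subset_left
        · rw [sUnion_image, ← iUnion₂_inter, ← sUnion_eq_biUnion, hFT, inter_eq_right.2 h]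
    _ ≤ #F := mk_image_le
    _ = chainCov T := hcard

theorem chainCov_union_le (S T : Set α) : chainCov (S ∪ T) ≤ chainCov S + chainCov T := by
  obtain ⟨F, hF, hFS, hFcard⟩ := exists_chain_cover_mk_eq_chainCov S
  obtain ⟨G, hG, hGT, hGcard⟩ := exists_chain_cover_mk_eq_chainCov T
  calc chainCov (S ∪ T) ≤ #(F ∪ G : Set (Set α)) := by
        refine chainCov_le_mk ?_ (by rw [sUnion_union, hFS, hGT])
        rintro C (hC | hC)
        exacts [(hF C hC).2, (hG C hC).2]
    _ ≤ #F + #G := mk_union_le F G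
    _ = chainCov S + chainCov T := by rw [hFcard, hGcard]

theorem chainCov_iUnion_le {ι : Type u} (S : ι → Set α) :
    chainCov (⋃ i, S i) ≤ sum fun i => chainCov (S i) := by
  choose F hF hFS hFcard using fun i => exists_chain_cover_mk_eq_chainCov (S i)
  calc chainCov (⋃ i, S i) ≤ #(⋃ i, F i) := by
        refine chainCov_le_mk ?_ (by simp only [sUnion_iUnion, hFS])
        simp only [mem_iUnion]
        rintro C ⟨i, hC⟩
        exact (hF i C hC).2
    _ ≤ sum fun i => #(F i) := mk_iUnion_le_sum_mk
    _ = sum fun i => chainCov (S i) := by simp only [hFcard]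

theorem le_chainCov_Ici {ν : Cardinal.{u}} (hν : ℵ₀ ≤ ν)
    (hcov : ν ≤ chainCov (Set.univ : Set α)) {x : α} (hx : chainCov (Ici x)ᶜ < ν) :
    ν ≤ chainCov (Ici x) := by
  by_contra! h
  have := (chainCov_union_le (Ici x) (Ici x)ᶜ).trans_lt (add_lt_of_lt hν h hx)
  rw [union_compl_self] at this
  exact (hcov.trans_lt this).false

theorem bddAbove_of_mk_lt_cof {ν : Cardinal.{u}} (hν : ℵ₀ ≤ ν)
    (hcov : ν ≤ chainCov (Set.univ : Set α)) (hup : ∀ x : α, chainCov (Ici x)ᶜ < ν)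
    {s : Set α} (hs : #s < ν.ord.cof) : BddAbove s := by
  by_contra hs'
  have hU : ⋃ x : s, (Ici (x : α))ᶜ = Set.univ := by
    refine eq_univ_of_forall fun z => ?_
    simpa using not_bddAbove_iff'.1 hs' z
  have := (chainCov_iUnion_le _).trans_lt (sum_lt_of_lt_cof_ord hν hs fun x : s => hup x)
  rw [hU] at this
  exact (hcov.trans_lt this).false

end chainCov

theorem exists_ordinal_seq_le_of_bddAbove {α : Type u} [Preorder α] [Nonempty α]
    {c : Cardinal.{u}} (hbdd : ∀ s : Set α, #s < c → BddAbove s) (f : Ordinal.{u} → α → α) :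
    ∃ x : Ordinal.{u} → α, ∀ o' o, o' < o → o < c.ord → f o' (x o') ≤ x o := by
  have hpick : ∀ o (prev : ∀ o' < o, α),
      ∃ z, o < c.ord → ∀ o' (h : o' < o), f o' (prev o' h) ≤ z := by
    intro o prev
    by_cases ho : o < c.ord
    · have hcard : #(range fun i : Iio o => f i (prev i (mem_Iio.1 i.2))) < c := by
        rw [← lift_lt.{u, u + 1}]
        refine mk_range_le_lift.trans_lt ?_
        rw [mk_Iio_ordinal, lift_lift, lift_lt]
        exact lt_ord.1 ho
      obtain ⟨z, hz⟩ := hbdd _ hcard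
      exact ⟨z, fun _ o' h => hz ⟨⟨o', h⟩, rfl⟩⟩
    · exact ⟨Classical.arbitrary α, fun h => absurd h ho⟩
  choose pick hpick using hpick
  refine ⟨Ordinal.lt_wf.fix pick, fun o' o h ho => ?_⟩
  rw [Ordinal.lt_wf.fix_eq pick o]
  exact hpick o (fun o' _ => Ordinal.lt_wf.fix pick o') ho o' h

theorem exists_increasing_sequence_general {α : Type u} [PartialOrder α] (ν : Cardinal)
    (hν : ℵ₀ < ν) (hlim : Order.IsSuccLimit ν)
    (κs : Ordinal → Cardinal)
    (hlt : ∀ o < ν.ord.cof.ord, κs o < ν)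
    (hcov : ν ≤ chainCov (Set.univ : Set α))
    (hup : ∀ x : α, chainCov (Set.Ici x)ᶜ < ν)
    (hinterval : ∀ μ < ν, ∀ x : α, Order.succ μ < chainCov (Set.Ici x) →
      ∃ a b : α, x ≤ a ∧ a < b ∧ μ ≤ chainCov (Set.Ico a b)) :
    ∃ x : Ordinal → α,
      (∀ o₁ o₂ : Ordinal, o₁ < o₂ → o₂ < ν.ord.cof.ord → x o₁ ≤ x o₂) ∧
      ∀ o < ν.ord.cof.ord, κs o ≤ chainCov (Set.Ico (x o) (x (o + 1))) := by
  have hstep : ∀ (o : Ordinal) (z : α),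
      ∃ b, z ≤ b ∧ (o < ν.ord.cof.ord → κs o ≤ chainCov (Ico z b)) := by
    intro o z
    by_cases ho : o < ν.ord.cof.ord
    · obtain ⟨a, b, hza, hab, hκ⟩ := hinterval (κs o) (hlt o ho) z
        ((hlim.succ_lt (hlt o ho)).trans_le (le_chainCov_Ici hν.le hcov (hup z)))
      exact ⟨b, hza.trans hab.le, fun _ => hκ.trans (chainCov_mono (Ico_subset_Ico_left hza))⟩
    · exact ⟨z, le_rfl, fun h => absurd h ho⟩
  choose next le_next hnext using hstep
  have hcof : ℵ₀ ≤ ν.ord.cof :=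
    Ordinal.aleph0_le_cof_iff.2 (Ordinal.one_lt_cof_iff.2 (isSuccLimit_ord hν.le))
  have hbdd := fun (s : Set α) (hs : #s < ν.ord.cof) => bddAbove_of_mk_lt_cof hν.le hcov hup hs
  -- an upper bound of `∅` is in particular a point of `α`
  obtain ⟨z, -⟩ := hbdd ∅ (by simpa using aleph0_pos.trans_le hcof)
  have : Nonempty α := ⟨z⟩
  obtain ⟨x, hx⟩ := exists_ordinal_seq_le_of_bddAbove hbdd next
  refine ⟨x, fun o₁ o₂ h h₂ => (le_next o₁ (x o₁)).trans (hx o₁ o₂ h h₂), fun o ho => ?_⟩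
  have ho' : o + 1 < ν.ord.cof.ord := (isSuccLimit_ord hcof).add_one_lt ho
  exact (hnext o (x o) ho).trans
    (chainCov_mono (Ico_subset_Ico_right (hx o (o + 1) (lt_add_one o) ho')))

theorem exists_increasing_sequence {α : Type u} [PartialOrder α] (ν : Cardinal)
    (hν : ℵ₀ < ν) (hlim : Order.IsSuccLimit ν)
    (κs : Ordinal → Cardinal)
    (hsucc : ∀ o < ν.ord.cof.ord, ∃ μ : Cardinal, κs o = Order.succ μ)
    (hlt : ∀ o < ν.ord.cof.ord, κs o < ν)
    (hsup : ∀ c < ν, ∃ o < ν.ord.cof.ord, c ≤ κs o)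
    (hfa : ∀ A : Set α, IsAntichain (· ≤ ·) A → A.Finite)
    (hcov : ν ≤ chainCov (Set.univ : Set α))
    (hup : ∀ x : α, chainCov (Set.Ici x)ᶜ < ν)
    (hinterval : ∀ μ < ν, ∀ x : α, Order.succ μ < chainCov (Set.Ici x) →
      ∃ a b : α, x ≤ a ∧ a < b ∧ μ ≤ chainCov (Set.Ico a b)) :
    ∃ x : Ordinal → α,
      (∀ o₁ o₂ : Ordinal, o₁ < o₂ → o₂ < ν.ord.cof.ord → x o₁ ≤ x o₂) ∧
      ∀ o < ν.ord.cof.ord, κs o ≤ chainCov (Set.Ico (x o) (x (o + 1))) :=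
  exists_increasing_sequence_general ν hν hlim κs hlt hcov hup hinterval
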